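/- arXiv:2405.11361 — 2 statements merged into one kernel-verified Lean document; each statement's English description precedes it below -/
import Mathlib

section
/- Let labels be nonempty lists of natural numbers and let a 'step at ℓ' transform a label-independent set by replacing ℓ with its children ℓ++[1], …, ℓ++[k(ℓ)] for some arity function k. Then no label can be stepped twice in any sequence of steps: once a step occurs at ℓ, the label ℓ never reappears in any set reachable by further steps. -/
def LabelIndependent (L : Finset (List ℕ)) : Prop :=
  ∀ ℓ₁ ∈ L, ∀ ℓ₂ ∈ L, ℓ₁ ≠ ℓ₂ → ¬ ℓ₁ <+: ℓ₂

/-- Step at label ℓ: ℓ must be in L, and it is replaced by its children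
ℓ++[1], …, ℓ++[k] for some arity k ≥ 0. -/
def StepAt (ℓ : List ℕ) (L L' : Finset (List ℕ)) : Prop :=
  ℓ ∈ L ∧ ∃ k : ℕ, L' = L.erase ℓ ∪ (Finset.Icc 1 k).image (fun i => ℓ ++ [i])

def StepAny (L L' : Finset (List ℕ)) : Prop := ∃ ℓ, StepAt ℓ L L'

theorem no_label_stepped_twice (L L' : Finset (List ℕ)) (ℓ : List ℕ)
    (hne : ∀ ℓ' ∈ L, ℓ' ≠ ([] : List ℕ))
    (hind : LabelIndependent L)
    (hstep : StepAt ℓ L L') :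
    ∀ L'' : Finset (List ℕ), Relation.ReflTransGen StepAny L' L'' → ℓ ∉ L'' := by
  -- Invariant: no element of a reachable set is a prefix of ℓ.
  have key : ∀ L'' : Finset (List ℕ), Relation.ReflTransGen StepAny L' L'' →
      ∀ m ∈ L'', ¬ m <+: ℓ := by
    intro L'' h
    induction h with
    | refl =>
      obtain ⟨hℓ, k, rfl⟩ := hstep
      intro m hm
      rcases Finset.mem_union.1 hm with hm | hm
      · exact hind m (Finset.mem_of_mem_erase hm) ℓ hℓ (Finset.ne_of_mem_erase hm)
      · obtain ⟨i, _, rfl⟩ := Finset.mem_image.1 hm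
        intro hp
        have := hp.length_le
        simp at this
    | tail _ hs ih =>
      obtain ⟨ℓ₀, hℓ₀, k, rfl⟩ := hs
      intro m hm hp
      rcases Finset.mem_union.1 hm with hm | hm
      · exact ih m (Finset.mem_of_mem_erase hm) hp
      · obtain ⟨i, _, rfl⟩ := Finset.mem_image.1 hm
        exact ih ℓ₀ hℓ₀ ((List.prefix_append ℓ₀ [i]).trans hp)
  intro L'' h hℓ
  exact key L'' h ℓ hℓ (List.prefix_refl ℓ)
end

section
/- Under a strongly confluent labeled rewrite system in which every terminating run from an initial state p executes exactly the same set of labels, any two terminating evaluation strategies starting at p execute the same multiset of labeled steps and reach the same final state. In particular, sequential (in-order) and opportunistic (all-enabled) evaluation of a terminating program perform exactly the same external calls and produce the same result. -/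
variable {P L : Type*}

/-- Stepping a state through a list of labels, in order. -/
inductive MultiStep (step : L → P → P → Prop) : List L → P → P → Prop
  | nil (p : P) : MultiStep step [] p p
  | cons {ℓ : L} {ls : List L} {p q r : P} :
      step ℓ p q → MultiStep step ls q r → MultiStep step (ℓ :: ls) p r

/-- A label is enabled in a state if it can be stepped. -/
def Enabled (step : L → P → P → Prop) (ℓ : L) (p : P) : Prop := ∃ q, step ℓ p q

lemma MultiStep.extract [DecidableEq L] (step : L → P → P → Prop)
    (hdet : ∀ (ℓ : L) (p q q' : P), step ℓ p q → step ℓ p q' → q = q')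
    (hcomm : ∀ (ℓ₁ ℓ₂ : L) (p p₁ p₂ : P), ℓ₁ ≠ ℓ₂ → step ℓ₁ p p₁ → step ℓ₂ p p₂ →
      ∃ p₁₂, step ℓ₂ p₁ p₁₂ ∧ step ℓ₁ p₂ p₁₂)
    {ls : List L} {p q : P} (h : MultiStep step ls p q) :
    ∀ {ℓ : L} {p' : P}, step ℓ p p' →
      (ℓ ∈ ls ∧ MultiStep step (ls.erase ℓ) p' q) ∨
      (ℓ ∉ ls ∧ ∃ q', MultiStep step ls p' q' ∧ step ℓ q q') := by
  induction h with
  | nil p =>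
    intro ℓ p' hs
    exact Or.inr ⟨by simp, p', MultiStep.nil p', hs⟩
  | cons hs1 htail ih =>
    rename_i ℓ₁ ls' p q₁ r
    intro ℓ p' hs
    by_cases hℓ : ℓ = ℓ₁
    · subst hℓ
      left
      refine ⟨by simp, ?_⟩
      have : p' = q₁ := hdet _ _ _ _ hs hs1
      subst this
      simpa using htail
    · obtain ⟨m, hm2, hm1⟩ := hcomm ℓ ℓ₁ p p' q₁ hℓ hs hs1
      rcases ih hm1 with ⟨hmem, hrest⟩ | ⟨hmem, q', hrun, hstep⟩
      · left
        refine ⟨List.mem_cons_of_mem _ hmem, ?_⟩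
        rw [List.erase_cons_tail (by simpa using Ne.symm hℓ)]
        exact MultiStep.cons hm2 hrest
      · right
        refine ⟨by simp [hℓ, hmem], q', MultiStep.cons hm2 hrun, hstep⟩

theorem terminating_runs_same_labels_same_result (step : L → P → P → Prop)
    (hdet : ∀ (ℓ : L) (p q q' : P), step ℓ p q → step ℓ p q' → q = q')
    (hcomm : ∀ (ℓ₁ ℓ₂ : L) (p p₁ p₂ : P), ℓ₁ ≠ ℓ₂ → step ℓ₁ p p₁ → step ℓ₂ p p₂ →
      ∃ p₁₂, step ℓ₂ p₁ p₁₂ ∧ step ℓ₁ p₂ p₁₂)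
    (ls₁ ls₂ : List L) (p q₁ q₂ : P)
    (hnd₁ : ls₁.Nodup) (hnd₂ : ls₂.Nodup)
    (hrun₁ : MultiStep step ls₁ p q₁) (hrun₂ : MultiStep step ls₂ p q₂)
    (hterm₁ : ∀ ℓ, ¬ Enabled step ℓ q₁) (hterm₂ : ∀ ℓ, ¬ Enabled step ℓ q₂) :
    (∀ ℓ, ℓ ∈ ls₁ ↔ ℓ ∈ ls₂) ∧ q₁ = q₂ := by
  classical
  induction hrun₁ generalizing ls₂ q₂ with
  | nil p =>
    cases hrun₂ with
    | nil => exact ⟨fun ℓ => Iff.rfl, rfl⟩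
    | cons hs _ => exact absurd ⟨_, hs⟩ (hterm₁ _)
  | cons hs htail ih =>
    rename_i ℓ ls p q₁' r
    rcases MultiStep.extract step hdet hcomm hrun₂ hs with
      ⟨hmem, hrest⟩ | ⟨_, q', _, hstep⟩
    · obtain ⟨hiff, heq⟩ := ih _ _ hnd₁.of_cons (hnd₂.erase ℓ) hrest hterm₁ hterm₂
      refine ⟨fun ℓ' => ?_, heq⟩
      have hℓnot : ℓ ∉ ls := by simpa using hnd₁.notMem
      by_cases h' : ℓ' = ℓ
      · subst h'; simp [hmem]
      · have h2 : ℓ' ∈ ls ↔ ℓ' ∈ ls₂ := by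
          rw [hiff ℓ', hnd₂.mem_erase_iff]; simp [h']
        simp [h', h2]
    · exact absurd ⟨q', hstep⟩ (hterm₂ ℓ)
end
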